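/- arXiv:1508.06899 — 2 statements merged into one kernel-verified Lean document; each statement's English description precedes it below -/
import Mathlib

section
/- For every closed ctACPps process term p there exists a basic term q ∈ B (a basic term of ctBPAps) such that the equation p = q is derivable from the axioms of ctACPps. -/
set_option autoImplicit true
set_option maxHeartbeats 1000000

/-- The three truth values of LP→⊥: true, false, both. -/
inductive V3 : Type
  | t
  | f
  | b
  deriving DecidableEq

/-- Formulas of LP→⊥ over propositional variables of type `α`. -/
inductive Fml (α : Type) : Type
  | var : α → Fml α
  | bot : Fml α
  | neg : Fml α → Fml α
  | conj : Fml α → Fml α → Fml α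
  | disj : Fml α → Fml α → Fml α
  | imp : Fml α → Fml α → Fml α

namespace Fml

/-- ⊤ abbreviates ¬⊥. -/
def top {α : Type} : Fml α := neg bot

/-- A↔B abbreviates (A→B)∧(B→A). -/
def iff' {α : Type} (A B : Fml α) : Fml α := conj (imp A B) (imp B A)

end Fml

/-- LP→⊥ truth table for negation. -/
def negT : V3 → V3
  | .f => .t
  | .t => .f
  | .b => .b

/-- LP→⊥ truth table for conjunction. -/
def conjT : V3 → V3 → V3
  | .f, _ => .f
  | _, .f => .f
  | .t, .t => .t
  | _, _ => .b

/-- LP→⊥ truth table for disjunction. -/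
def disjT : V3 → V3 → V3
  | .t, _ => .t
  | _, .t => .t
  | .f, .f => .f
  | _, _ => .b

/-- LP→⊥ truth table for implication. -/
def impT : V3 → V3 → V3
  | .f, _ => .t
  | _, y => y

/-- The LP→⊥ valuation determined by an assignment `σ` of truth values to variables. -/
def eval {α : Type} (σ : α → V3) : Fml α → V3
  | .var x => σ x
  | .bot => .f
  | .neg A => negT (eval σ A)
  | .conj A B => conjT (eval σ A) (eval σ B)
  | .disj A B => disjT (eval σ A) (eval σ B)
  | .imp A B => impT (eval σ A) (eval σ B)

/-- Logical equivalence in LP→⊥: the same value under every valuation. -/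
def FEquiv {α : Type} (A B : Fml α) : Prop := ∀ σ : α → V3, eval σ A = eval σ B

/-- `φ ∈ [⊥]`: `φ` is logically equivalent to ⊥. -/
def EqBot {α : Type} (φ : Fml α) : Prop := ∀ σ : α → V3, eval σ φ = V3.f

/-- Semantic consequence in LP→⊥ (designated values t and b). -/
def SemCons {α : Type} (Γ : Set (Fml α)) (A : Fml α) : Prop :=
  ∀ σ : α → V3, (∀ C ∈ Γ, eval σ C ≠ V3.f) → eval σ A ≠ V3.f

/-- The Hilbert system of LP→⊥, with hypotheses `Γ`. -/
inductive Hilb {α : Type} (Γ : Set (Fml α)) : Fml α → Prop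
  | hyp {A : Fml α} : A ∈ Γ → Hilb Γ A
  | mp {A B : Fml α} : Hilb Γ (A.imp B) → Hilb Γ A → Hilb Γ B
  | ax1 (A B : Fml α) : Hilb Γ (A.imp (B.imp A))
  | ax2 (A B C : Fml α) : Hilb Γ ((A.imp (B.imp C)).imp ((A.imp B).imp (A.imp C)))
  | ax3 (A B : Fml α) : Hilb Γ (((A.imp B).imp A).imp A)
  | ax4 (A : Fml α) : Hilb Γ (Fml.bot.imp A)
  | ax5 (A B : Fml α) : Hilb Γ ((A.conj B).imp A)
  | ax6 (A B : Fml α) : Hilb Γ ((A.conj B).imp B)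
  | ax7 (A B : Fml α) : Hilb Γ (A.imp (B.imp (A.conj B)))
  | ax8 (A B : Fml α) : Hilb Γ (A.imp (A.disj B))
  | ax9 (A B : Fml α) : Hilb Γ (B.imp (A.disj B))
  | ax10 (A B C : Fml α) : Hilb Γ ((A.imp C).imp ((B.imp C).imp ((A.disj B).imp C)))
  | ax11 (A : Fml α) : Hilb Γ (Fml.iff' A.neg.neg A)
  | ax12 (A B : Fml α) : Hilb Γ (Fml.iff' (A.imp B).neg (A.conj B.neg))
  | ax13 (A B : Fml α) : Hilb Γ (Fml.iff' (A.conj B).neg (A.neg.disj B.neg))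
  | ax14 (A B : Fml α) : Hilb Γ (Fml.iff' (A.disj B).neg (A.neg.conj B.neg))
  | ax15 (A : Fml α) : Hilb Γ (A.disj A.neg)

/-- The internalization (A↔B)∧(¬A↔¬B) of logical equivalence. -/
def InternEq {α : Type} (φ ψ : Fml α) : Fml α :=
  (Fml.iff' φ ψ).conj (Fml.iff' φ.neg ψ.neg)

/-- Derivable equality of propositions: the least congruence containing the
instances of axiom IMP (φ = ψ whenever ⊢ (φ↔ψ)∧(¬φ↔¬ψ)). -/
inductive PropEq {α : Type} : Fml α → Fml α → Prop
  | imp {φ ψ} : Hilb (∅ : Set (Fml α)) (InternEq φ ψ) → PropEq φ ψ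
  | refl (φ) : PropEq φ φ
  | symm {φ ψ} : PropEq φ ψ → PropEq ψ φ
  | trans {φ ψ χ} : PropEq φ ψ → PropEq ψ χ → PropEq φ χ
  | negC {φ ψ} : PropEq φ ψ → PropEq φ.neg ψ.neg
  | conjC {φ ψ φ' ψ'} : PropEq φ ψ → PropEq φ' ψ' → PropEq (φ.conj φ') (ψ.conj ψ')
  | disjC {φ ψ φ' ψ'} : PropEq φ ψ → PropEq φ' ψ' → PropEq (φ.disj φ') (ψ.disj ψ')
  | impC {φ ψ φ' ψ'} : PropEq φ ψ → PropEq φ' ψ' → PropEq (φ.imp φ') (ψ.imp ψ')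

/-- Closed ctACPps process terms (δ is `delta`, ⊗ is `nex`, `gc`/`se` are the
guarded command and signal emission, `par` is ∥, `lm` is left merge ⌊⌊,
`cm` is communication merge |, `encap H` is ∂_H). -/
inductive APT (α Act : Type) : Type
  | act : Act → APT α Act
  | delta : APT α Act
  | nex : APT α Act
  | alt : APT α Act → APT α Act → APT α Act
  | seq : APT α Act → APT α Act → APT α Act
  | gc : Fml α → APT α Act → APT α Act
  | se : Fml α → APT α Act → APT α Act
  | par : APT α Act → APT α Act → APT α Act
  | lm : APT α Act → APT α Act → APT α Act
  | cm : APT α Act → APT α Act → APT α Act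
  | encap : Set Act → APT α Act → APT α Act

/-- The constant corresponding to an element of A ∪ {δ} (encoded as `Option Act`,
with `none` standing for δ). -/
def actd {α Act : Type} : Option Act → APT α Act
  | some a => .act a
  | none => .delta

section
variable {α Act : Type}

/-- Derivable equality from the axioms of ctACPps (γ is the communication
function on A ∪ {δ}; `a | b` in the axioms stands for γ(a,b), which is the
content of axiom `CF`): the least congruence satisfying A1-A7, NE1-NE3,
GC1-GC7, SE1-SE8, IMP, CM1-CM9 (with CM2S, CM3S), C1-C3, D1-D4,
GC8S-GC11 and SE9-SE12. -/
inductive ADeriv (γ : Option Act → Option Act → Option Act) :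
    APT α Act → APT α Act → Prop
  | refl (p : APT α Act) : ADeriv γ p p
  | symm {p q} : ADeriv γ p q → ADeriv γ q p
  | trans {p q r} : ADeriv γ p q → ADeriv γ q r → ADeriv γ p r
  | altC {p q p' q'} : ADeriv γ p q → ADeriv γ p' q' → ADeriv γ (.alt p p') (.alt q q')
  | seqC {p q p' q'} : ADeriv γ p q → ADeriv γ p' q' → ADeriv γ (.seq p p') (.seq q q')
  | gcC {φ ψ p q} : PropEq φ ψ → ADeriv γ p q → ADeriv γ (.gc φ p) (.gc ψ q)
  | seC {φ ψ p q} : PropEq φ ψ → ADeriv γ p q → ADeriv γ (.se φ p) (.se ψ q)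
  | parC {p q p' q'} : ADeriv γ p q → ADeriv γ p' q' → ADeriv γ (.par p p') (.par q q')
  | lmC {p q p' q'} : ADeriv γ p q → ADeriv γ p' q' → ADeriv γ (.lm p p') (.lm q q')
  | cmC {p q p' q'} : ADeriv γ p q → ADeriv γ p' q' → ADeriv γ (.cm p p') (.cm q q')
  | encapC (H : Set Act) {p q} : ADeriv γ p q → ADeriv γ (.encap H p) (.encap H q)
  | A1 (x y : APT α Act) : ADeriv γ (.alt x y) (.alt y x)
  | A2 (x y z : APT α Act) : ADeriv γ (.alt (.alt x y) z) (.alt x (.alt y z))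
  | A3 (x : APT α Act) : ADeriv γ (.alt x x) x
  | A4 (x y z : APT α Act) : ADeriv γ (.seq (.alt x y) z) (.alt (.seq x z) (.seq y z))
  | A5 (x y z : APT α Act) : ADeriv γ (.seq (.seq x y) z) (.seq x (.seq y z))
  | A6 (x : APT α Act) : ADeriv γ (.alt x .delta) x
  | A7 (x : APT α Act) : ADeriv γ (.seq .delta x) .delta
  | NE1 (x : APT α Act) : ADeriv γ (.alt x .nex) .nex
  | NE2 (x : APT α Act) : ADeriv γ (.seq .nex x) .nex
  | NE3 (a : Option Act) : ADeriv γ (.seq (actd a) .nex) (.delta : APT α Act)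
  | GC1 (x : APT α Act) : ADeriv γ (.gc Fml.top x) x
  | GC2 (x : APT α Act) : ADeriv γ (.gc .bot x) .delta
  | GC3 (φ : Fml α) : ADeriv γ (.gc φ .delta) (.delta : APT α Act)
  | GC4 (φ : Fml α) (x y : APT α Act) :
      ADeriv γ (.gc φ (.alt x y)) (.alt (.gc φ x) (.gc φ y))
  | GC5 (φ : Fml α) (x y : APT α Act) : ADeriv γ (.gc φ (.seq x y)) (.seq (.gc φ x) y)
  | GC6 (φ ψ : Fml α) (x : APT α Act) : ADeriv γ (.gc φ (.gc ψ x)) (.gc (φ.conj ψ) x)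
  | GC7 (φ ψ : Fml α) (x : APT α Act) :
      ADeriv γ (.gc (φ.disj ψ) x) (.alt (.gc φ x) (.gc ψ x))
  | SE1 (x : APT α Act) : ADeriv γ (.se Fml.top x) x
  | SE2 (x : APT α Act) : ADeriv γ (.se .bot x) .nex
  | SE3 (φ : Fml α) : ADeriv γ (.se φ .nex) (.nex : APT α Act)
  | SE4 (φ : Fml α) (x y : APT α Act) : ADeriv γ (.alt (.se φ x) y) (.se φ (.alt x y))
  | SE5 (φ : Fml α) (x y : APT α Act) : ADeriv γ (.seq (.se φ x) y) (.se φ (.seq x y))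
  | SE6 (φ ψ : Fml α) (x : APT α Act) : ADeriv γ (.se φ (.se ψ x)) (.se (φ.conj ψ) x)
  | SE7 (φ : Fml α) (x : APT α Act) : ADeriv γ (.se φ (.gc φ x)) (.se φ x)
  | SE8 (φ ψ : Fml α) (x : APT α Act) :
      ADeriv γ (.gc φ (.se ψ x)) (.se (φ.imp ψ) (.gc φ x))
  | CM1 (x y : APT α Act) :
      ADeriv γ (.par x y) (.alt (.alt (.lm x y) (.lm y x)) (.cm x y))
  | CM2S (a : Option Act) (x : APT α Act) :
      ADeriv γ (.lm (actd a) x) (.alt (.seq (actd a) x) (.encap Set.univ x))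
  | CM3S (a : Option Act) (x y : APT α Act) :
      ADeriv γ (.lm (.seq (actd a) x) y)
        (.alt (.seq (actd a) (.par x y)) (.encap Set.univ y))
  | CM4 (x y z : APT α Act) : ADeriv γ (.lm (.alt x y) z) (.alt (.lm x z) (.lm y z))
  | CM5 (a b : Option Act) (x : APT α Act) :
      ADeriv γ (.cm (.seq (actd a) x) (actd b)) (.seq (actd (γ a b)) x)
  | CM6 (a b : Option Act) (x : APT α Act) :
      ADeriv γ (.cm (actd a) (.seq (actd b) x)) (.seq (actd (γ a b)) x)
  | CM7 (a b : Option Act) (x y : APT α Act) :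
      ADeriv γ (.cm (.seq (actd a) x) (.seq (actd b) y)) (.seq (actd (γ a b)) (.par x y))
  | CM8 (x y z : APT α Act) : ADeriv γ (.cm (.alt x y) z) (.alt (.cm x z) (.cm y z))
  | CM9 (x y z : APT α Act) : ADeriv γ (.cm x (.alt y z)) (.alt (.cm x y) (.cm x z))
  | CF (a b : Option Act) : ADeriv γ (.cm (actd a) (actd b)) (actd (γ a b) : APT α Act)
  | C1 (a b : Option Act) :
      ADeriv γ (.cm (actd a) (actd b)) (.cm (actd b) (actd a) : APT α Act)
  | C2 (a b c : Option Act) :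
      ADeriv γ (.cm (.cm (actd a) (actd b)) (actd c))
        (.cm (actd a) (.cm (actd b) (actd c)) : APT α Act)
  | C3 (a : Option Act) : ADeriv γ (.cm .delta (actd a)) (.delta : APT α Act)
  | D1 (H : Set Act) (a : Act) : a ∉ H → ADeriv γ (.encap H (.act a)) (.act a)
  | D1d (H : Set Act) : ADeriv γ (.encap H (.delta : APT α Act)) .delta
  | D2 (H : Set Act) (a : Act) : a ∈ H → ADeriv γ (.encap H (.act a)) .delta
  | D3 (H : Set Act) (x y : APT α Act) :
      ADeriv γ (.encap H (.alt x y)) (.alt (.encap H x) (.encap H y))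
  | D4 (H : Set Act) (x y : APT α Act) :
      ADeriv γ (.encap H (.seq x y)) (.seq (.encap H x) (.encap H y))
  | GC8S (φ : Fml α) (x y : APT α Act) :
      ADeriv γ (.lm (.gc φ x) y) (.alt (.gc φ (.lm x y)) (.encap Set.univ y))
  | GC9S (φ : Fml α) (x y : APT α Act) :
      ADeriv γ (.cm (.gc φ x) y) (.alt (.gc φ (.cm x y)) (.encap Set.univ y))
  | GC10S (φ : Fml α) (x y : APT α Act) :
      ADeriv γ (.cm x (.gc φ y)) (.alt (.gc φ (.cm x y)) (.encap Set.univ x))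
  | GC11 (H : Set Act) (φ : Fml α) (x : APT α Act) :
      ADeriv γ (.encap H (.gc φ x)) (.gc φ (.encap H x))
  | SE9 (φ : Fml α) (x y : APT α Act) : ADeriv γ (.lm (.se φ x) y) (.se φ (.lm x y))
  | SE10 (φ : Fml α) (x y : APT α Act) : ADeriv γ (.cm (.se φ x) y) (.se φ (.cm x y))
  | SE11 (φ : Fml α) (x y : APT α Act) : ADeriv γ (.cm x (.se φ y)) (.se φ (.cm x y))
  | SE12 (H : Set Act) (φ : Fml α) (x : APT α Act) :
      ADeriv γ (.encap H (.se φ x)) (.se φ (.encap H x))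

/-- Basic terms (basic terms of ctBPAps, within the ctACPps syntax). -/
inductive ABasic : APT α Act → Prop
  | nex : ABasic (.nex : APT α Act)
  | emiDelta {φ : Fml α} : ¬ EqBot φ → ABasic (.se φ .delta)
  | gcAct {φ : Fml α} (a : Act) : ¬ EqBot φ → ABasic (.gc φ (.act a))
  | gcSeq {φ : Fml α} (a : Act) {p : APT α Act} :
      ¬ EqBot φ → ABasic p → ABasic (.gc φ (.seq (.act a) p))
  | alt {p q : APT α Act} : ABasic p → ABasic q → ABasic (.alt p q)

/-- The signal (root signal) emitted by a process term. -/
def sigA : APT α Act → Fml α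
  | .act _ => Fml.top
  | .delta => Fml.top
  | .nex => .bot
  | .alt p q => (sigA p).conj (sigA q)
  | .seq p _ => sigA p
  | .gc φ p => φ.imp (sigA p)
  | .se φ p => φ.conj (sigA p)
  | .par p q => (sigA p).conj (sigA q)
  | .lm p q => (sigA p).conj (sigA q)
  | .cm p q => (sigA p).conj (sigA q)
  | .encap _ p => sigA p

/-- The structural operational semantics of ctACPps: `ATr γ p φ a (some q)` is the
action step p –φ,a→ q and `ATr γ p φ a none` is the action termination p –φ,a→ √. -/
inductive ATr (γ : Option Act → Option Act → Option Act) :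
    APT α Act → Fml α → Act → Option (APT α Act) → Prop
  | act (a : Act) : ATr γ (.act a) Fml.top a none
  | altL {x φ a o} (y : APT α Act) :
      ATr γ x φ a o → ¬ EqBot (sigA (APT.alt x y)) → ATr γ (.alt x y) φ a o
  | altR {y φ a o} (x : APT α Act) :
      ATr γ y φ a o → ¬ EqBot (sigA (APT.alt x y)) → ATr γ (.alt x y) φ a o
  | seqT {x φ a} (y : APT α Act) :
      ATr γ x φ a none → ¬ EqBot (sigA y) → ATr γ (.seq x y) φ a (some y)
  | seqS {x φ a x'} (y : APT α Act) :
      ATr γ x φ a (some x') → ATr γ (.seq x y) φ a (some (.seq x' y))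
  | gcR {x φ a o} (ψ : Fml α) :
      ATr γ x φ a o → ¬ EqBot (φ.conj ψ) → ATr γ (.gc ψ x) (φ.conj ψ) a o
  | seR {x φ a o} (ψ : Fml α) :
      ATr γ x φ a o → ¬ EqBot (sigA (APT.se ψ x)) → ATr γ (.se ψ x) φ a o
  | parTL {x φ a} (y : APT α Act) :
      ATr γ x φ a none → ¬ EqBot (sigA (APT.par x y)) → ¬ EqBot (sigA y) →
      ATr γ (.par x y) φ a (some y)
  | parTR (x : APT α Act) {y φ a} :
      ATr γ y φ a none → ¬ EqBot (sigA (APT.par x y)) → ¬ EqBot (sigA x) →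
      ATr γ (.par x y) φ a (some x)
  | parSL {x φ a x'} (y : APT α Act) :
      ATr γ x φ a (some x') → ¬ EqBot (sigA (APT.par x y)) →
      ¬ EqBot (sigA (APT.par x' y)) → ATr γ (.par x y) φ a (some (.par x' y))
  | parSR (x : APT α Act) {y φ a y'} :
      ATr γ y φ a (some y') → ¬ EqBot (sigA (APT.par x y)) →
      ¬ EqBot (sigA (APT.par x y')) → ATr γ (.par x y) φ a (some (.par x y'))
  | parCTT {x y : APT α Act} {φ ψ a b c} :
      ATr γ x φ a none → ATr γ y ψ b none → γ (some a) (some b) = some c →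
      ¬ EqBot (φ.conj ψ) → ¬ EqBot (sigA (APT.par x y)) →
      ATr γ (.par x y) (φ.conj ψ) c none
  | parCTS {x y : APT α Act} {φ ψ a b c y'} :
      ATr γ x φ a none → ATr γ y ψ b (some y') → γ (some a) (some b) = some c →
      ¬ EqBot (φ.conj ψ) → ¬ EqBot (sigA (APT.par x y)) →
      ATr γ (.par x y) (φ.conj ψ) c (some y')
  | parCST {x y : APT α Act} {φ ψ a b c x'} :
      ATr γ x φ a (some x') → ATr γ y ψ b none → γ (some a) (some b) = some c →
      ¬ EqBot (φ.conj ψ) → ¬ EqBot (sigA (APT.par x y)) →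
      ATr γ (.par x y) (φ.conj ψ) c (some x')
  | parCSS {x y : APT α Act} {φ ψ a b c x' y'} :
      ATr γ x φ a (some x') → ATr γ y ψ b (some y') → γ (some a) (some b) = some c →
      ¬ EqBot (φ.conj ψ) → ¬ EqBot (sigA (APT.par x y)) →
      ¬ EqBot (sigA (APT.par x' y')) →
      ATr γ (.par x y) (φ.conj ψ) c (some (.par x' y'))
  | lmT {x φ a} (y : APT α Act) :
      ATr γ x φ a none → ¬ EqBot (sigA (APT.lm x y)) → ¬ EqBot (sigA y) →
      ATr γ (.lm x y) φ a (some y)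
  | lmS {x φ a x'} (y : APT α Act) :
      ATr γ x φ a (some x') → ¬ EqBot (sigA (APT.lm x y)) →
      ¬ EqBot (sigA (APT.par x' y)) → ATr γ (.lm x y) φ a (some (.par x' y))
  | cmTT {x y : APT α Act} {φ ψ a b c} :
      ATr γ x φ a none → ATr γ y ψ b none → γ (some a) (some b) = some c →
      ¬ EqBot (φ.conj ψ) → ¬ EqBot (sigA (APT.cm x y)) →
      ATr γ (.cm x y) (φ.conj ψ) c none
  | cmTS {x y : APT α Act} {φ ψ a b c y'} :
      ATr γ x φ a none → ATr γ y ψ b (some y') → γ (some a) (some b) = some c →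
      ¬ EqBot (φ.conj ψ) → ¬ EqBot (sigA (APT.cm x y)) →
      ATr γ (.cm x y) (φ.conj ψ) c (some y')
  | cmST {x y : APT α Act} {φ ψ a b c x'} :
      ATr γ x φ a (some x') → ATr γ y ψ b none → γ (some a) (some b) = some c →
      ¬ EqBot (φ.conj ψ) → ¬ EqBot (sigA (APT.cm x y)) →
      ATr γ (.cm x y) (φ.conj ψ) c (some x')
  | cmSS {x y : APT α Act} {φ ψ a b c x' y'} :
      ATr γ x φ a (some x') → ATr γ y ψ b (some y') → γ (some a) (some b) = some c →
      ¬ EqBot (φ.conj ψ) → ¬ EqBot (sigA (APT.cm x y)) →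
      ¬ EqBot (sigA (APT.par x' y')) →
      ATr γ (.cm x y) (φ.conj ψ) c (some (.par x' y'))
  | encapR {x φ a o} (H : Set Act) :
      ATr γ x φ a o → a ∉ H → ATr γ (.encap H x) φ a (Option.map (APT.encap H) o)

/-- Lift a relation on process terms to their optional (√-extended) targets. -/
def AOptR (R : APT α Act → APT α Act → Prop) :
    Option (APT α Act) → Option (APT α Act) → Prop
  | none, none => True
  | some p, some q => R p q
  | _, _ => False

/-- The (one-directional) simulation conditions of a splitting bisimulation. -/
def ASim (γ : Option Act → Option Act → Option Act)
    (R : APT α Act → APT α Act → Prop) (p q : APT α Act) : Prop :=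
  (∀ φ a o, ATr γ p φ a o →
    ∀ σ : α → V3, eval σ (sigA p) ≠ V3.f → eval σ φ ≠ V3.f →
      ∃ ψ o', eval σ ψ = eval σ φ ∧ ATr γ q ψ a o' ∧ AOptR R o o') ∧
  FEquiv (sigA p) (sigA q)

/-- `R` is a bisimulation. -/
def AIsBisim (γ : Option Act → Option Act → Option Act)
    (R : APT α Act → APT α Act → Prop) : Prop :=
  ∀ p q, R p q → ASim γ R p q ∧ ASim γ (fun u v => R v u) q p

/-- Bisimulation equivalence. -/
def ABisim (γ : Option Act → Option Act → Option Act) (p q : APT α Act) : Prop :=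
  ∃ R, AIsBisim γ R ∧ R p q

end

/-!
Every semantic equivalence of LP→⊥ is an instance of IMP, because the Hilbert system is complete
(Kalmár's method: hypotheses describing the values of the variables prove what the value of any
formula says about it, and these hypotheses are then discharged by case splits). Hence a condition
equivalent to ⊥ may be replaced by ⊥, and the guarded commands and emissions it carries collapse
to δ and ⊗. Elimination is then an induction on terms: every operator applied to basic terms is
pushed through +, guards and emissions. Merges need a second induction, on the sum of the sizes of
the two basic arguments, because a·x ⌊⌊ y and a·x | b·y lead to x ∥ y.
-/

namespace Hilb

variable {α : Type} {Γ : Set (Fml α)} {A B C : Fml α}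

theorem imp_self (A : Fml α) : Hilb Γ (A.imp A) :=
  ((ax2 A (A.imp A) A).mp (ax1 A (A.imp A))).mp (ax1 A A)

theorem deduction (h : Hilb (insert A Γ) B) : Hilb Γ (A.imp B) := by
  induction h with
  | hyp h =>
    rcases Set.mem_insert_iff.mp h with rfl | h
    · exact imp_self _
    · exact (ax1 _ _).mp (hyp h)
  | mp _ _ ih1 ih2 => exact ((ax2 _ _ _).mp ih1).mp ih2
  | ax1 A B => exact (ax1 _ _).mp (ax1 A B)
  | ax2 A B C => exact (ax1 _ _).mp (ax2 A B C)
  | ax3 A B => exact (ax1 _ _).mp (ax3 A B)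
  | ax4 A => exact (ax1 _ _).mp (ax4 A)
  | ax5 A B => exact (ax1 _ _).mp (ax5 A B)
  | ax6 A B => exact (ax1 _ _).mp (ax6 A B)
  | ax7 A B => exact (ax1 _ _).mp (ax7 A B)
  | ax8 A B => exact (ax1 _ _).mp (ax8 A B)
  | ax9 A B => exact (ax1 _ _).mp (ax9 A B)
  | ax10 A B C => exact (ax1 _ _).mp (ax10 A B C)
  | ax11 A => exact (ax1 _ _).mp (ax11 A)
  | ax12 A B => exact (ax1 _ _).mp (ax12 A B)
  | ax13 A B => exact (ax1 _ _).mp (ax13 A B)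
  | ax14 A B => exact (ax1 _ _).mp (ax14 A B)
  | ax15 A => exact (ax1 _ _).mp (ax15 A)

theorem imp_trans (h₁ : Hilb Γ (A.imp B)) (h₂ : Hilb Γ (B.imp C)) : Hilb Γ (A.imp C) :=
  ((ax2 A B C).mp ((ax1 (B.imp C) A).mp h₂)).mp h₁

theorem disj_elim (h₁ : Hilb Γ (A.imp C)) (h₂ : Hilb Γ (B.imp C)) :
    Hilb Γ ((A.disj B).imp C) :=
  ((ax10 A B C).mp h₁).mp h₂

theorem conj_intro (h₁ : Hilb Γ A) (h₂ : Hilb Γ B) : Hilb Γ (A.conj B) :=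
  ((ax7 A B).mp h₁).mp h₂

theorem iff_mp (h : Hilb Γ (Fml.iff' A B)) : Hilb Γ (A.imp B) := (ax5 _ _).mp h

theorem iff_mpr (h : Hilb Γ (Fml.iff' A B)) : Hilb Γ (B.imp A) := (ax6 _ _).mp h

theorem neg_neg_intro (h : Hilb Γ A) : Hilb Γ A.neg.neg := (iff_mpr (ax11 A)).mp h

theorem imp_imp_of (h : Hilb Γ B) : Hilb Γ ((B.imp C).imp C) :=
  ((ax2 _ _ _).mp (imp_self _)).mp ((ax1 _ _).mp h)

theorem top : Hilb Γ (Fml.top : Fml α) :=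
  (disj_elim (ax4 Fml.bot.neg) (imp_self _)).mp (ax15 .bot)

theorem of_neg_imp_bot (h : Hilb Γ (A.neg.imp .bot)) : Hilb Γ A :=
  (disj_elim (imp_self A) (imp_trans h (ax4 A))).mp (ax15 A)

theorem neg_of_imp_bot (h : Hilb Γ (A.imp .bot)) : Hilb Γ A.neg :=
  (disj_elim (imp_trans h (ax4 A.neg)) (imp_self A.neg)).mp (ax15 A)

/-- Classical excluded middle, from Peirce's law. -/
theorem disj_imp_bot (A : Fml α) : Hilb Γ (A.disj (A.imp .bot)) := by
  set E := A.disj (A.imp .bot)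
  have hA : Hilb (insert (E.imp .bot) Γ) (A.imp .bot) :=
    deduction ((hyp (Set.mem_insert_of_mem _ (Set.mem_insert _ _))).mp
      ((ax8 A (A.imp .bot)).mp (hyp (Set.mem_insert _ _))))
  exact (ax3 E .bot).mp (deduction ((ax9 A (A.imp .bot)).mp hA))

end Hilb

theorem negT_eq_f {x : V3} : negT x = .f ↔ x = .t := by cases x <;> simp [negT]
theorem negT_eq_t {x : V3} : negT x = .t ↔ x = .f := by cases x <;> simp [negT]

theorem conjT_eq_f {x y : V3} : conjT x y = .f ↔ x = .f ∨ y = .f := by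
  cases x <;> cases y <;> simp [conjT]
theorem conjT_eq_t {x y : V3} : conjT x y = .t ↔ x = .t ∧ y = .t := by
  cases x <;> cases y <;> simp [conjT]

theorem disjT_eq_f {x y : V3} : disjT x y = .f ↔ x = .f ∧ y = .f := by
  cases x <;> cases y <;> simp [disjT]
theorem disjT_eq_t {x y : V3} : disjT x y = .t ↔ x = .t ∨ y = .t := by
  cases x <;> cases y <;> simp [disjT]

theorem impT_eq_f {x y : V3} : impT x y = .f ↔ x ≠ .f ∧ y = .f := by
  cases x <;> cases y <;> simp [impT]
theorem impT_eq_t {x y : V3} : impT x y = .t ↔ x = .f ∨ y = .t := by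
  cases x <;> cases y <;> simp [impT]

namespace Fml

variable {α : Type}

/-- A formula expressing that `P` has value `v` (`P → ⊥` is the classical negation). -/
def describe (v : V3) (P : Fml α) : Fml α :=
  match v with
  | .t => P.neg.imp .bot
  | .f => P.imp .bot
  | .b => P.conj P.neg

/-- Kalmár's invariant: `Γ` proves those of `A`, `¬A`, `A → ⊥`, `¬A → ⊥` that are designated
when `A` takes its value under `σ`. -/
def Decides (Γ : Set (Fml α)) (σ : α → V3) (A : Fml α) : Prop :=
  (eval σ A ≠ .f → Hilb Γ A) ∧ (eval σ A ≠ .t → Hilb Γ A.neg) ∧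
    (eval σ A = .f → Hilb Γ (A.imp .bot)) ∧ (eval σ A = .t → Hilb Γ (A.neg.imp .bot))

end Fml

namespace Fml.Decides

open Hilb

variable {α : Type} {Γ : Set (Fml α)} {σ : α → V3} {A B : Fml α}

theorem var {p : α} (h : Hilb Γ (describe (σ p) (var p))) : Decides Γ σ (var p) := by
  simp only [Decides, eval]
  cases hp : σ p <;> rw [hp] at h <;> simp only [describe] at h
  · exact ⟨fun _ => of_neg_imp_bot h, by simp, by simp, fun _ => h⟩
  · exact ⟨by simp, fun _ => neg_of_imp_bot h, fun _ => h, by simp⟩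
  · exact ⟨fun _ => (ax5 _ _).mp h, fun _ => (ax6 _ _).mp h, by simp, by simp⟩

theorem bot : Decides Γ σ (.bot : Fml α) :=
  ⟨by simp [eval], fun _ => Hilb.top, fun _ => imp_self _, by simp [eval]⟩

theorem neg (h : Decides Γ σ A) : Decides Γ σ A.neg := by
  obtain ⟨h₁, h₂, h₃, h₄⟩ := h
  simp only [Decides, eval, ne_eq, negT_eq_f, negT_eq_t]
  exact ⟨h₂, fun h => neg_neg_intro (h₁ h), h₄,
    fun h => imp_trans (iff_mp (ax11 A)) (h₃ h)⟩

theorem conj (hA : Decides Γ σ A) (hB : Decides Γ σ B) : Decides Γ σ (A.conj B) := by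
  obtain ⟨a₁, a₂, a₃, a₄⟩ := hA
  obtain ⟨b₁, b₂, b₃, b₄⟩ := hB
  simp only [Decides, eval, ne_eq, conjT_eq_f, conjT_eq_t, not_or, not_and_or]
  refine ⟨fun h => conj_intro (a₁ h.1) (b₁ h.2), fun h => (iff_mpr (ax13 A B)).mp ?_,
    fun h => ?_, fun h => imp_trans (iff_mp (ax13 A B)) (disj_elim (a₄ h.1) (b₄ h.2))⟩
  · rcases h with h | h
    · exact (ax8 _ _).mp (a₂ h)
    · exact (ax9 _ _).mp (b₂ h)
  · rcases h with h | h
    · exact imp_trans (ax5 A B) (a₃ h)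
    · exact imp_trans (ax6 A B) (b₃ h)

theorem disj (hA : Decides Γ σ A) (hB : Decides Γ σ B) : Decides Γ σ (A.disj B) := by
  obtain ⟨a₁, a₂, a₃, a₄⟩ := hA
  obtain ⟨b₁, b₂, b₃, b₄⟩ := hB
  simp only [Decides, eval, ne_eq, disjT_eq_f, disjT_eq_t, not_or, not_and_or]
  refine ⟨fun h => ?_, fun h => (iff_mpr (ax14 A B)).mp (conj_intro (a₂ h.1) (b₂ h.2)),
    fun h => disj_elim (a₃ h.1) (b₃ h.2), fun h => imp_trans (iff_mp (ax14 A B)) ?_⟩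
  · rcases h with h | h
    · exact (ax8 _ _).mp (a₁ h)
    · exact (ax9 _ _).mp (b₁ h)
  · rcases h with h | h
    · exact imp_trans (ax5 _ _) (a₄ h)
    · exact imp_trans (ax6 _ _) (b₄ h)

theorem imp (hA : Decides Γ σ A) (hB : Decides Γ σ B) : Decides Γ σ (A.imp B) := by
  obtain ⟨a₁, a₂, a₃, a₄⟩ := hA
  obtain ⟨b₁, b₂, b₃, b₄⟩ := hB
  simp only [Decides, eval, ne_eq, impT_eq_f, impT_eq_t, not_or, not_and_or, not_not]
  refine ⟨fun h => ?_, fun h => (iff_mpr (ax12 A B)).mp (conj_intro (a₁ h.1) (b₂ h.2)),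
    fun h => imp_trans (imp_imp_of (a₁ h.1)) (b₃ h.2),
    fun h => imp_trans (iff_mp (ax12 A B)) ?_⟩
  · rcases h with h | h
    · exact imp_trans (a₃ h) (ax4 B)
    · exact (ax1 B A).mp (b₁ h)
  · rcases h with h | h
    · exact imp_trans (ax5 _ _) (a₃ h)
    · exact imp_trans (ax6 _ _) (b₄ h)

theorem of_describe (hΓ : ∀ p, Hilb Γ (describe (σ p) (.var p))) (A : Fml α) :
    Decides Γ σ A := by
  induction A with
  | var p => exact var (hΓ p)
  | bot => exact bot
  | neg A ih => exact ih.neg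
  | conj A B ihA ihB => exact ihA.conj ihB
  | disj A B ihA ihB => exact ihA.disj ihB
  | imp A B ihA ihB => exact ihA.imp ihB

end Fml.Decides

namespace Hilb

open Fml

variable {α : Type} {Γ : Set (Fml α)} {A : Fml α}

theorem describe_exhaustive (P : Fml α) :
    Hilb Γ ((describe .t P).disj ((describe .f P).disj (describe .b P))) := by
  have hP : Hilb Γ (P.imp ((describe .t P).disj ((describe .f P).disj (describe .b P)))) := by
    refine deduction ((disj_elim (deduction ?_) (ax8 _ _)).mp (disj_imp_bot P.neg))
    exact (ax9 _ _).mp ((ax9 _ _).mp (conj_intro (hyp (by simp)) (hyp (by simp))))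
  exact (disj_elim hP (imp_trans (ax8 _ _) (ax9 _ _))).mp (disj_imp_bot P)

theorem by_value (P : Fml α) (h : ∀ v, Hilb (insert (describe v P) Γ) A) : Hilb Γ A :=
  (disj_elim (deduction (h .t)) (disj_elim (deduction (h .f)) (deduction (h .b)))).mp
    (describe_exhaustive P)

theorem of_describe_finset (s : Finset α)
    (h : ∀ σ : α → V3, Hilb ((fun p => describe (σ p) (var p)) '' ↑s) A) :
    Hilb (∅ : Set (Fml α)) A := by
  classical
  induction s using Finset.induction_on with
  | empty => simpa using h fun _ => .t
  | insert p s hp ih =>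
    refine ih fun σ => by_value (var p) fun v => ?_
    have hσ : ∀ q ∈ (s : Set α),
        describe (Function.update σ p v q) (var q) = describe (σ q) (var q) :=
      fun q hq => by rw [Function.update_of_ne (by rintro rfl; exact hp hq)]
    simpa [Set.image_insert_eq, Set.image_congr hσ] using h (Function.update σ p v)

theorem complete [Fintype α] (h : ∀ σ : α → V3, eval σ A ≠ .f) :
    Hilb (∅ : Set (Fml α)) A :=
  of_describe_finset Finset.univ fun σ =>
    (Decides.of_describe (σ := σ) (fun p => hyp (Set.mem_image_of_mem _ (Finset.mem_coe.2
      (Finset.mem_univ p)))) A).1 (h σ)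

end Hilb

namespace PropEq

variable {α : Type} [Fintype α] {φ ψ : Fml α}

theorem of_fequiv (h : FEquiv φ ψ) : PropEq φ ψ :=
  .imp <| Hilb.complete fun σ => by
    simp only [InternEq, Fml.iff', eval, h σ]
    cases eval σ ψ <;> simp [conjT, impT, negT]

theorem bot_of_eqBot (h : EqBot φ) : PropEq φ .bot := of_fequiv h

end PropEq

theorem not_eqBot_top {α : Type} : ¬ EqBot (Fml.top : Fml α) := fun h => by
  simpa [Fml.top, eval, negT] using h fun _ => .t

def APT.size {α Act : Type} : APT α Act → ℕ
  | .act _ | .delta | .nex => 1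
  | .alt p q | .seq p q | .par p q | .lm p q | .cm p q => p.size + q.size + 1
  | .gc _ p | .se _ p | .encap _ p => p.size + 1

namespace ADeriv

variable {α Act : Type} {γ : Option Act → Option Act → Option Act}

theorem nex_eq_se_bot : ADeriv γ (.nex : APT α Act) (.se .bot .delta) := (SE2 .delta).symm

theorem encap_univ_actd (o : Option Act) :
    ADeriv γ (.encap Set.univ (actd o : APT α Act)) .delta := by
  cases o with
  | none => exact D1d _
  | some a => exact D2 _ a (Set.mem_univ a)

theorem encap_univ_seq_act (a : Act) (x : APT α Act) :
    ADeriv γ (.encap Set.univ (.seq (.act a) x)) .delta :=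
  (D4 _ _ x).trans ((seqC (encap_univ_actd (some a)) (refl _)).trans (A7 _))

theorem se_eq_alt (φ : Fml α) (p : APT α Act) : ADeriv γ (.se φ p) (.alt (.se φ .delta) p) :=
  (seC (.refl φ) ((A1 .delta p).trans (A6 p)).symm).trans (SE4 φ .delta p).symm

theorem gc_of_eqBot [Fintype α] {φ : Fml α} (h : EqBot φ) (x : APT α Act) :
    ADeriv γ (.gc φ x) .delta :=
  (gcC (.bot_of_eqBot h) (refl x)).trans (GC2 x)

theorem lm_delta (x : APT α Act) : ADeriv γ (.lm .delta x) (.encap Set.univ x) :=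
  (CM2S none x).trans ((altC (A7 x) (refl _)).trans ((A1 _ _).trans (A6 _)))

end ADeriv

def HasBasicForm {α Act : Type} (γ : Option Act → Option Act → Option Act) (p : APT α Act) :
    Prop :=
  ∃ q, ABasic q ∧ ADeriv γ p q

namespace HasBasicForm

variable {α Act : Type} {γ : Option Act → Option Act → Option Act}

theorem of_basic {p : APT α Act} (h : ABasic p) : HasBasicForm γ p := ⟨p, h, .refl p⟩

theorem of_deriv {p q : APT α Act} (h : ADeriv γ p q) (hq : HasBasicForm γ q) :
    HasBasicForm γ p :=
  let ⟨r, hr, hqr⟩ := hq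
  ⟨r, hr, h.trans hqr⟩

theorem map {f : APT α Act → APT α Act}
    (hf : ∀ {p q}, ADeriv γ p q → ADeriv γ (f p) (f q))
    (hb : ∀ {q}, ABasic q → HasBasicForm γ (f q)) {p : APT α Act} (hp : HasBasicForm γ p) :
    HasBasicForm γ (f p) :=
  let ⟨_, hq, hpq⟩ := hp
  of_deriv (hf hpq) (hb hq)

theorem map₂ {f : APT α Act → APT α Act → APT α Act}
    (hf : ∀ {p q p' q'}, ADeriv γ p q → ADeriv γ p' q' → ADeriv γ (f p p') (f q q'))
    (hb : ∀ {q q'}, ABasic q → ABasic q' → HasBasicForm γ (f q q')) {p p' : APT α Act}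
    (hp : HasBasicForm γ p) (hp' : HasBasicForm γ p') : HasBasicForm γ (f p p') :=
  let ⟨_, hq, hpq⟩ := hp
  let ⟨_, hq', hpq'⟩ := hp'
  of_deriv (hf hpq hpq') (hb hq hq')

theorem alt {p q : APT α Act} (hp : HasBasicForm γ p) (hq : HasBasicForm γ q) :
    HasBasicForm γ (.alt p q) :=
  map₂ ADeriv.altC (fun hp hq => of_basic (.alt hp hq)) hp hq

theorem nex : HasBasicForm γ (.nex : APT α Act) := of_basic .nex

theorem delta : HasBasicForm γ (.delta : APT α Act) :=
  of_deriv (ADeriv.SE1 .delta).symm (of_basic (.emiDelta not_eqBot_top))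

theorem act (a : Act) : HasBasicForm γ (.act a : APT α Act) :=
  of_deriv (ADeriv.GC1 (.act a)).symm (of_basic (.gcAct a not_eqBot_top))

theorem act_or_delta (o : Option Act) : HasBasicForm γ (actd o : APT α Act) := by
  cases o with
  | none => exact delta
  | some a => exact act a

theorem seq_act (a : Act) {x : APT α Act} (hx : ABasic x) : HasBasicForm γ (.seq (.act a) x) :=
  of_deriv (ADeriv.GC1 _).symm (of_basic (.gcSeq a not_eqBot_top hx))

theorem seq_actd (o : Option Act) {x : APT α Act} (hx : ABasic x) :
    HasBasicForm γ (.seq (actd o) x) := by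
  cases o with
  | none => exact of_deriv (ADeriv.A7 x) delta
  | some a => exact seq_act a hx

variable [Fintype α]

theorem se_delta (φ : Fml α) : HasBasicForm γ (.se φ .delta : APT α Act) := by
  by_cases h : EqBot φ
  · exact of_deriv ((ADeriv.seC (.bot_of_eqBot h) (.refl _)).trans (ADeriv.SE2 _)) nex
  · exact of_basic (.emiDelta h)

theorem gc_act (φ : Fml α) (a : Act) : HasBasicForm γ (.gc φ (.act a) : APT α Act) := by
  by_cases h : EqBot φ
  · exact of_deriv (ADeriv.gc_of_eqBot h _) delta
  · exact of_basic (.gcAct a h)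

theorem gc_seq_act (φ : Fml α) (a : Act) {x : APT α Act} (hx : ABasic x) :
    HasBasicForm γ (.gc φ (.seq (.act a) x)) := by
  by_cases h : EqBot φ
  · exact of_deriv (ADeriv.gc_of_eqBot h _) delta
  · exact of_basic (.gcSeq a h hx)

theorem se_of_basic (φ : Fml α) {p : APT α Act} (hp : ABasic p) : HasBasicForm γ (.se φ p) :=
  of_deriv (ADeriv.se_eq_alt φ p) ((se_delta φ).alt (of_basic hp))

theorem gc_of_basic (φ : Fml α) {p : APT α Act} (hp : ABasic p) :
    HasBasicForm γ (.gc φ p) := by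
  induction hp with
  | nex =>
    refine of_deriv ?_ (se_delta (φ.imp .bot))
    exact (ADeriv.gcC (.refl φ) ADeriv.nex_eq_se_bot).trans
      ((ADeriv.SE8 φ .bot .delta).trans (ADeriv.seC (.refl _) (ADeriv.GC3 φ)))
  | @emiDelta ψ _ =>
    exact of_deriv ((ADeriv.SE8 φ ψ .delta).trans (ADeriv.seC (.refl _) (ADeriv.GC3 φ)))
      (se_delta _)
  | @gcAct ψ a _ => exact of_deriv (ADeriv.GC6 φ ψ _) (gc_act _ a)
  | @gcSeq ψ a x _ hx _ => exact of_deriv (ADeriv.GC6 φ ψ _) (gc_seq_act _ a hx)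
  | alt _ _ ih₁ ih₂ => exact of_deriv (ADeriv.GC4 φ _ _) (ih₁.alt ih₂)

theorem seq_of_basic {p q : APT α Act} (hp : ABasic p) (hq : ABasic q) :
    HasBasicForm γ (.seq p q) := by
  induction hp with
  | nex => exact of_deriv (ADeriv.NE2 q) nex
  | @emiDelta φ _ =>
    exact of_deriv ((ADeriv.SE5 φ .delta q).trans (ADeriv.seC (.refl φ) (ADeriv.A7 q)))
      (se_delta φ)
  | @gcAct φ a _ => exact of_deriv (ADeriv.GC5 φ (.act a) q).symm (gc_seq_act φ a hq)
  | @gcSeq φ a x _ _ ih =>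
    obtain ⟨r, hr, hxr⟩ := ih
    refine of_deriv ?_ (gc_seq_act φ a hr)
    exact (ADeriv.GC5 φ _ q).symm.trans
      (ADeriv.gcC (.refl φ) ((ADeriv.A5 _ x q).trans (ADeriv.seqC (.refl _) hxr)))
  | alt _ _ ih₁ ih₂ => exact of_deriv (ADeriv.A4 _ _ q) (ih₁.alt ih₂)

theorem encap_of_basic (H : Set Act) {p : APT α Act} (hp : ABasic p) :
    HasBasicForm γ (.encap H p) := by
  induction hp with
  | nex =>
    refine of_deriv ?_ nex
    exact (ADeriv.encapC H ADeriv.nex_eq_se_bot).trans ((ADeriv.SE12 H .bot .delta).trans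
      (ADeriv.SE2 _))
  | @emiDelta φ _ =>
    exact of_deriv ((ADeriv.SE12 H φ .delta).trans (ADeriv.seC (.refl φ) (ADeriv.D1d H)))
      (se_delta φ)
  | @gcAct φ a _ =>
    refine of_deriv (ADeriv.GC11 H φ _) ?_
    by_cases h : a ∈ H
    · exact of_deriv ((ADeriv.gcC (.refl φ) (ADeriv.D2 H a h)).trans (ADeriv.GC3 φ)) delta
    · exact of_deriv (ADeriv.gcC (.refl φ) (ADeriv.D1 H a h)) (gc_act φ a)
  | @gcSeq φ a x _ _ ih =>
    obtain ⟨r, hr, hxr⟩ := ih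
    refine of_deriv ((ADeriv.GC11 H φ _).trans (ADeriv.gcC (.refl φ) (ADeriv.D4 H _ _))) ?_
    by_cases h : a ∈ H
    · refine of_deriv ((ADeriv.gcC (.refl φ) ?_).trans (ADeriv.GC3 φ)) delta
      exact (ADeriv.seqC (ADeriv.D2 H a h) hxr).trans (ADeriv.A7 r)
    · exact of_deriv (ADeriv.gcC (.refl φ) (ADeriv.seqC (ADeriv.D1 H a h) hxr))
        (gc_seq_act φ a hr)
  | alt _ _ ih₁ ih₂ => exact of_deriv (ADeriv.D3 H _ _) (ih₁.alt ih₂)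

theorem se (φ : Fml α) {p : APT α Act} : HasBasicForm γ p → HasBasicForm γ (.se φ p) :=
  map (ADeriv.seC (.refl φ)) (se_of_basic φ)

theorem gc (φ : Fml α) {p : APT α Act} : HasBasicForm γ p → HasBasicForm γ (.gc φ p) :=
  map (ADeriv.gcC (.refl φ)) (gc_of_basic φ)

theorem seq {p q : APT α Act} :
    HasBasicForm γ p → HasBasicForm γ q → HasBasicForm γ (.seq p q) :=
  map₂ ADeriv.seqC seq_of_basic

theorem encap (H : Set Act) {p : APT α Act} :
    HasBasicForm γ p → HasBasicForm γ (.encap H p) :=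
  map (ADeriv.encapC H) (encap_of_basic H)

theorem cm_actd (hγ : ∀ o, γ o none = none) (o : Option Act) {q : APT α Act} (hq : ABasic q) :
    HasBasicForm γ (.cm (actd o) q) := by
  induction hq with
  | nex =>
    refine of_deriv ?_ nex
    exact (ADeriv.cmC (.refl _) ADeriv.nex_eq_se_bot).trans
      ((ADeriv.SE11 .bot _ .delta).trans (ADeriv.SE2 _))
  | @emiDelta ψ _ =>
    refine of_deriv ((ADeriv.SE11 ψ _ .delta).trans (ADeriv.seC (.refl ψ) ?_)) (se_delta ψ)
    have h := ADeriv.CF (γ := γ) (α := α) o none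
    rwa [hγ] at h
  | @gcAct ψ b _ =>
    refine of_deriv (ADeriv.GC10S ψ _ _)
      ((gc ψ ?_).alt (of_deriv (ADeriv.encap_univ_actd o) delta))
    exact of_deriv (ADeriv.CF o (some b)) (act_or_delta _)
  | @gcSeq ψ b y _ hy _ =>
    refine of_deriv (ADeriv.GC10S ψ _ _)
      ((gc ψ ?_).alt (of_deriv (ADeriv.encap_univ_actd o) delta))
    exact of_deriv (ADeriv.CM6 o (some b) y) (seq_actd _ hy)
  | alt _ _ ih₁ ih₂ => exact of_deriv (ADeriv.CM9 _ _ _) (ih₁.alt ih₂)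

theorem cm_seq_act (hγ : ∀ o, γ o none = none) (a : Act) {x q : APT α Act} (hx : ABasic x)
    (hq : ABasic q)
    (hpar : ∀ y, ABasic y → y.size < q.size → HasBasicForm γ (.par x y)) :
    HasBasicForm γ (.cm (.seq (.act a) x) q) := by
  induction hq with
  | nex =>
    refine of_deriv ?_ nex
    exact (ADeriv.cmC (.refl _) ADeriv.nex_eq_se_bot).trans
      ((ADeriv.SE11 .bot _ .delta).trans (ADeriv.SE2 _))
  | @emiDelta ψ _ =>
    refine of_deriv ((ADeriv.SE11 ψ _ .delta).trans (ADeriv.seC (.refl ψ) ?_)) (se_delta ψ)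
    have h := ADeriv.CM5 (γ := γ) (some a) none x
    rw [hγ] at h
    exact h.trans (ADeriv.A7 x)
  | @gcAct ψ b _ =>
    refine of_deriv (ADeriv.GC10S ψ _ _)
      ((gc ψ ?_).alt (of_deriv (ADeriv.encap_univ_seq_act a x) delta))
    exact of_deriv (ADeriv.CM5 (some a) (some b) x) (seq_actd _ hx)
  | @gcSeq ψ b y _ hy _ =>
    refine of_deriv (ADeriv.GC10S ψ _ _)
      ((gc ψ ?_).alt (of_deriv (ADeriv.encap_univ_seq_act a x) delta))
    obtain ⟨r, hr, hxyr⟩ := hpar y hy (by simp only [APT.size]; omega)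
    exact of_deriv ((ADeriv.CM7 (some a) (some b) x y).trans (ADeriv.seqC (.refl _) hxyr))
      (seq_actd _ hr)
  | alt _ _ ih₁ ih₂ =>
    exact of_deriv (ADeriv.CM9 _ _ _)
      ((ih₁ fun y hy _ => hpar y hy (by simp only [APT.size] at *; omega)).alt
        (ih₂ fun y hy _ => hpar y hy (by simp only [APT.size] at *; omega)))

theorem cm_of_par (hγ : ∀ o, γ o none = none) {n : ℕ}
    (hpar : ∀ x y : APT α Act, ABasic x → ABasic y → x.size + y.size < n →
      HasBasicForm γ (.par x y))
    {p q : APT α Act} (hp : ABasic p) (hq : ABasic q) (hn : p.size + q.size ≤ n) :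
    HasBasicForm γ (.cm p q) := by
  induction hp with
  | nex =>
    refine of_deriv ?_ nex
    exact (ADeriv.cmC ADeriv.nex_eq_se_bot (.refl q)).trans
      ((ADeriv.SE10 .bot .delta q).trans (ADeriv.SE2 _))
  | @emiDelta φ _ => exact of_deriv (ADeriv.SE10 φ .delta q) (se φ (cm_actd hγ none hq))
  | @gcAct φ a _ =>
    exact of_deriv (ADeriv.GC9S φ _ q)
      ((gc φ (cm_actd hγ (some a) hq)).alt (encap_of_basic _ hq))
  | @gcSeq φ a x _ hx _ =>
    refine of_deriv (ADeriv.GC9S φ _ q) ((gc φ ?_).alt (encap_of_basic _ hq))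
    refine cm_seq_act hγ a hx hq fun y hy hyq => hpar x y hx hy ?_
    simp only [APT.size] at hn
    omega
  | alt _ _ ih₁ ih₂ =>
    simp only [APT.size] at hn
    exact of_deriv (ADeriv.CM8 _ _ q) ((ih₁ (by omega)).alt (ih₂ (by omega)))

theorem lm_of_par {n : ℕ}
    (hpar : ∀ x y : APT α Act, ABasic x → ABasic y → x.size + y.size < n →
      HasBasicForm γ (.par x y))
    {p q : APT α Act} (hp : ABasic p) (hq : ABasic q) (hn : p.size + q.size ≤ n) :
    HasBasicForm γ (.lm p q) := by
  induction hp with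
  | nex =>
    refine of_deriv ?_ nex
    exact (ADeriv.lmC ADeriv.nex_eq_se_bot (.refl q)).trans
      ((ADeriv.SE9 .bot .delta q).trans (ADeriv.SE2 _))
  | @emiDelta φ _ =>
    exact of_deriv (ADeriv.SE9 φ .delta q)
      (se φ (of_deriv (ADeriv.lm_delta q) (encap_of_basic _ hq)))
  | @gcAct φ a _ =>
    refine of_deriv (ADeriv.GC8S φ _ q) ((gc φ ?_).alt (encap_of_basic _ hq))
    exact of_deriv (ADeriv.CM2S (some a) q) ((seq_act a hq).alt (encap_of_basic _ hq))
  | @gcSeq φ a x _ hx _ =>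
    refine of_deriv (ADeriv.GC8S φ _ q) ((gc φ ?_).alt (encap_of_basic _ hq))
    simp only [APT.size] at hn
    obtain ⟨r, hr, hxqr⟩ := hpar x q hx hq (by omega)
    exact of_deriv ((ADeriv.CM3S (some a) x q).trans
      (ADeriv.altC (ADeriv.seqC (.refl _) hxqr) (.refl _)))
      ((seq_act a hr).alt (encap_of_basic _ hq))
  | alt _ _ ih₁ ih₂ =>
    simp only [APT.size] at hn
    exact of_deriv (ADeriv.CM4 _ _ q) ((ih₁ (by omega)).alt (ih₂ (by omega)))

theorem par_of_basic (hγ : ∀ o, γ o none = none) {p q : APT α Act} (hp : ABasic p)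
    (hq : ABasic q) : HasBasicForm γ (.par p q) := by
  induction hn : p.size + q.size using Nat.strong_induction_on generalizing p q with
  | _ n ih =>
    have hpar : ∀ x y : APT α Act, ABasic x → ABasic y → x.size + y.size < n →
        HasBasicForm γ (.par x y) := fun x y hx hy hlt => ih _ hlt hx hy rfl
    exact of_deriv (ADeriv.CM1 p q)
      (((lm_of_par hpar hp hq hn.le).alt (lm_of_par hpar hq hp (by omega))).alt
        (cm_of_par hγ hpar hp hq hn.le))

theorem cm_of_basic (hγ : ∀ o, γ o none = none) {p q : APT α Act} (hp : ABasic p)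
    (hq : ABasic q) : HasBasicForm γ (.cm p q) :=
  cm_of_par hγ (fun _ _ hx hy _ => par_of_basic hγ hx hy) hp hq le_rfl

theorem lm_of_basic (hγ : ∀ o, γ o none = none) {p q : APT α Act} (hp : ABasic p)
    (hq : ABasic q) : HasBasicForm γ (.lm p q) :=
  lm_of_par (fun _ _ hx hy _ => par_of_basic hγ hx hy) hp hq le_rfl

theorem par (hγ : ∀ o, γ o none = none) {p q : APT α Act} :
    HasBasicForm γ p → HasBasicForm γ q → HasBasicForm γ (.par p q) :=
  map₂ ADeriv.parC (par_of_basic hγ)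

theorem lm (hγ : ∀ o, γ o none = none) {p q : APT α Act} :
    HasBasicForm γ p → HasBasicForm γ q → HasBasicForm γ (.lm p q) :=
  map₂ ADeriv.lmC (lm_of_basic hγ)

theorem cm (hγ : ∀ o, γ o none = none) {p q : APT α Act} :
    HasBasicForm γ p → HasBasicForm γ q → HasBasicForm γ (.cm p q) :=
  map₂ ADeriv.cmC (cm_of_basic hγ)

end HasBasicForm

theorem ctACPps_elimination_general {α Act : Type} [Fintype α]
    (γ : Option Act → Option Act → Option Act)
    (hγcomm : ∀ a b, γ a b = γ b a)
    (hγdelta : ∀ a, γ none a = none)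
    (p : APT α Act) :
    ∃ q : APT α Act, ABasic q ∧ ADeriv γ p q := by
  have hγ : ∀ a, γ a none = none := fun a => (hγcomm a none).trans (hγdelta a)
  change HasBasicForm γ p
  induction p with
  | act a => exact .act a
  | delta => exact .delta
  | nex => exact .nex
  | alt p q ihp ihq => exact ihp.alt ihq
  | seq p q ihp ihq => exact ihp.seq ihq
  | gc φ p ih => exact ih.gc φ
  | se φ p ih => exact ih.se φ
  | par p q ihp ihq => exact ihp.par hγ ihq
  | lm p q ihp ihq => exact ihp.lm hγ ihq
  | cm p q ihp ihq => exact ihp.cm hγ ihq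
  | encap H p ih => exact ih.encap H

/-- Elimination for ctACPps: every closed term is derivably equal to a basic term. -/
theorem ctACPps_elimination {α Act : Type} [Fintype α] [Fintype Act]
    (γ : Option Act → Option Act → Option Act)
    (hγcomm : ∀ a b, γ a b = γ b a)
    (hγassoc : ∀ a b c, γ (γ a b) c = γ a (γ b c))
    (hγdelta : ∀ a, γ none a = none)
    (p : APT α Act) :
    ∃ q : APT α Act, ABasic q ∧ ADeriv γ p q :=
  ctACPps_elimination_general γ hγcomm hγdelta p
end

section
/- Bisimulation equivalence is a congruence with respect to the operators of ctACPps: for all closed ctACPps process terms p,q,p′,q′, every proposition φ, and every H⊆A, if p ↔ q and p′ ↔ q′ then p+p′ ↔ q+q′, p·p′ ↔ q·q′, φ:→p ↔ φ:→q, φ⌃p ↔ φ⌃q, p∥p′ ↔ q∥q′, p⌊⌊p′ ↔ q⌊⌊q′, p|p′ ↔ q|q′, and ∂_H(p) ↔ ∂_H(q). -/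
set_option autoImplicit true
set_option maxHeartbeats 1000000

/-! The relation `CongrStep (ABisim γ)`, which relates bisimilar terms and terms obtained by
applying the same operator to bisimilar arguments, is a bisimulation. Each transition rule of an
operator consults only transitions and signals of its arguments; those of bisimilar arguments are
matched under the same valuation by formulas of the same value, signals are compositional, and the
targets are bisimilar terms or operators applied to bisimilar terms. -/

section Semantics
variable {α : Type} {σ : α → V3} {A B C D : Fml α}

lemma conjT_ne_f_iff {x y : V3} : conjT x y ≠ .f ↔ x ≠ .f ∧ y ≠ .f := by
  cases x <;> cases y <;> simp [conjT]

lemma eval_conj_ne_f_iff : eval σ (A.conj B) ≠ .f ↔ eval σ A ≠ .f ∧ eval σ B ≠ .f :=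
  conjT_ne_f_iff

lemma eval_conj_congr (hA : eval σ A = eval σ C) (hB : eval σ B = eval σ D) :
    eval σ (A.conj B) = eval σ (C.conj D) :=
  congrArg₂ conjT hA hB

lemma eval_imp_of_ne_f (h : eval σ A ≠ .f) : eval σ (A.imp B) = eval σ B := by
  change impT _ _ = _
  cases hA : eval σ A <;> simp_all [impT]

lemma not_eqBot_of_eval_ne_f (h : eval σ A ≠ .f) : ¬EqBot A :=
  fun hA => h (hA σ)

lemma FEquiv.not_eqBot (h : FEquiv A B) (hA : ¬EqBot A) : ¬EqBot B :=
  fun hB => hA fun σ => (h σ).trans (hB σ)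

lemma FEquiv.conj (hAB : FEquiv A B) (hCD : FEquiv C D) : FEquiv (A.conj C) (B.conj D) :=
  fun σ => eval_conj_congr (hAB σ) (hCD σ)

lemma FEquiv.imp_right (hAB : FEquiv A B) : FEquiv (C.imp A) (C.imp B) :=
  fun σ => congrArg (impT (eval σ C)) (hAB σ)

end Semantics

section Simulation
variable {α Act : Type} {γ : Option Act → Option Act → Option Act}
  {R S : APT α Act → APT α Act → Prop} {p q x y : APT α Act} {o o' : Option (APT α Act)}

lemma AOptR.mono (hRS : ∀ u v, R u v → S u v) (h : AOptR R o o') : AOptR S o o' := by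
  cases o <;> cases o' <;> first | exact h | exact hRS _ _ h

lemma AOptR.map (f : APT α Act → APT α Act) (hf : ∀ u v, R u v → S (f u) (f v))
    (h : AOptR R o o') : AOptR S (o.map f) (o'.map f) := by
  cases o <;> cases o' <;> first | exact h | exact hf _ _ h

lemma AOptR.eq_none (h : AOptR R none o) : o = none := by
  cases o
  · rfl
  · exact h.elim

lemma AOptR.exists_of_some (h : AOptR R (some x) o) : ∃ y, o = some y ∧ R x y := by
  cases o
  · exact h.elim
  · exact ⟨_, rfl, h⟩

def Matched (γ : Option Act → Option Act → Option Act) (S : APT α Act → APT α Act → Prop)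
    (σ : α → V3) (q : APT α Act) (φ : Fml α) (a : Act) (o : Option (APT α Act)) : Prop :=
  ∃ ψ o', eval σ ψ = eval σ φ ∧ ATr γ q ψ a o' ∧ AOptR S o o'

lemma Matched.mono {σ : α → V3} {φ : Fml α} {a : Act} (hRS : ∀ u v, R u v → S u v)
    (h : Matched γ R σ q φ a o) : Matched γ S σ q φ a o :=
  let ⟨ψ, o', he, ht, ho⟩ := h
  ⟨ψ, o', he, ht, ho.mono hRS⟩

lemma ASim.mono (hRS : ∀ u v, R u v → S u v) (h : ASim γ R p q) : ASim γ S p q :=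
  ⟨fun φ a o ht σ hσ hφ => Matched.mono hRS (h.1 φ a o ht σ hσ hφ), h.2⟩

def AIsSim (γ : Option Act → Option Act → Option Act) (R : APT α Act → APT α Act → Prop) :
    Prop :=
  ∀ p q, R p q → ASim γ R p q

lemma aIsBisim_iff : AIsBisim γ R ↔ AIsSim γ R ∧ AIsSim γ (flip R) :=
  ⟨fun h => ⟨fun p q hpq => (h p q hpq).1, fun p q hpq => (h q p hpq).2⟩,
    fun h p q hpq => ⟨h.1 p q hpq, h.2 q p hpq⟩⟩

lemma AIsSim.matched {σ : α → V3} {φ : Fml α} {a : Act} (hR : AIsSim γ R) (h : R x y)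
    (ht : ATr γ x φ a o) (hσ : eval σ (sigA x) ≠ .f) (hφ : eval σ φ ≠ .f) :
    Matched γ R σ y φ a o :=
  (hR x y h).1 φ a o ht σ hσ hφ

lemma AIsSim.matched_sync {σ : α → V3} {x₁ x₂ y₁ y₂ : APT α Act} {φ₁ φ₂ : Fml α} {b₁ b₂ : Act}
    {o₁ o₂ : Option (APT α Act)} (hR : AIsSim γ R) (h₁ : R x₁ y₁) (h₂ : R x₂ y₂)
    (ht₁ : ATr γ x₁ φ₁ b₁ o₁) (ht₂ : ATr γ x₂ φ₂ b₂ o₂)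
    (hσ : eval σ ((sigA x₁).conj (sigA x₂)) ≠ .f) (hφ : eval σ (φ₁.conj φ₂) ≠ .f) :
    ∃ ψ₁ ψ₂ o₁' o₂', eval σ (ψ₁.conj ψ₂) = eval σ (φ₁.conj φ₂) ∧ ¬EqBot (ψ₁.conj ψ₂) ∧
      ATr γ y₁ ψ₁ b₁ o₁' ∧ ATr γ y₂ ψ₂ b₂ o₂' ∧ AOptR R o₁ o₁' ∧ AOptR R o₂ o₂' := by
  obtain ⟨hσ₁, hσ₂⟩ := eval_conj_ne_f_iff.mp hσ
  obtain ⟨hφ₁, hφ₂⟩ := eval_conj_ne_f_iff.mp hφ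
  obtain ⟨ψ₁, o₁', he₁, ht₁', ho₁⟩ := hR.matched h₁ ht₁ hσ₁ hφ₁
  obtain ⟨ψ₂, o₂', he₂, ht₂', ho₂⟩ := hR.matched h₂ ht₂ hσ₂ hφ₂
  have he := eval_conj_congr he₁ he₂
  exact ⟨ψ₁, ψ₂, o₁', o₂', he, not_eqBot_of_eval_ne_f (he ▸ hφ), ht₁', ht₂', ho₁, ho₂⟩

end Simulation

section CongrStep
variable {α Act : Type} {γ : Option Act → Option Act → Option Act}
  {R : APT α Act → APT α Act → Prop}

inductive CongrStep (R : APT α Act → APT α Act → Prop) : APT α Act → APT α Act → Prop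
  | base {x y} : R x y → CongrStep R x y
  | alt {x₁ y₁ x₂ y₂} : R x₁ y₁ → R x₂ y₂ → CongrStep R (.alt x₁ x₂) (.alt y₁ y₂)
  | seq {x₁ y₁ x₂ y₂} : R x₁ y₁ → R x₂ y₂ → CongrStep R (.seq x₁ x₂) (.seq y₁ y₂)
  | gc (ψ : Fml α) {x y} : R x y → CongrStep R (.gc ψ x) (.gc ψ y)
  | se (ψ : Fml α) {x y} : R x y → CongrStep R (.se ψ x) (.se ψ y)
  | par {x₁ y₁ x₂ y₂} : R x₁ y₁ → R x₂ y₂ → CongrStep R (.par x₁ x₂) (.par y₁ y₂)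
  | lm {x₁ y₁ x₂ y₂} : R x₁ y₁ → R x₂ y₂ → CongrStep R (.lm x₁ x₂) (.lm y₁ y₂)
  | cm {x₁ y₁ x₂ y₂} : R x₁ y₁ → R x₂ y₂ → CongrStep R (.cm x₁ x₂) (.cm y₁ y₂)
  | encap (K : Set Act) {x y} : R x y → CongrStep R (.encap K x) (.encap K y)

lemma CongrStep.flip {u v : APT α Act} (h : CongrStep (flip R) u v) : CongrStep R v u := by
  cases h with
  | base h => exact .base h
  | alt h₁ h₂ => exact .alt h₁ h₂
  | seq h₁ h₂ => exact .seq h₁ h₂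
  | gc ψ h => exact .gc ψ h
  | se ψ h => exact .se ψ h
  | par h₁ h₂ => exact .par h₁ h₂
  | lm h₁ h₂ => exact .lm h₁ h₂
  | cm h₁ h₂ => exact .cm h₁ h₂
  | encap K h => exact .encap K h

lemma CongrStep.sigA_equiv (hR : AIsSim γ R) {u v : APT α Act} (h : CongrStep R u v) :
    FEquiv (sigA u) (sigA v) := by
  have hsig {x y} (h : R x y) : FEquiv (sigA x) (sigA y) := (hR x y h).2
  cases h with
  | base h => exact hsig h
  | alt h₁ h₂ | par h₁ h₂ | lm h₁ h₂ | cm h₁ h₂ => exact (hsig h₁).conj (hsig h₂)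
  | seq h₁ _ => exact (hsig h₁ :)
  | gc ψ h => exact (hsig h).imp_right
  | se ψ h => exact fun σ => eval_conj_congr rfl (hsig h σ)
  | encap K h => exact (hsig h :)

lemma CongrStep.not_eqBot (hR : AIsSim γ R) {u v : APT α Act} (h : CongrStep R u v)
    {σ : α → V3} (hσ : eval σ (sigA u) ≠ .f) : ¬EqBot (sigA v) :=
  (h.sigA_equiv hR).not_eqBot (not_eqBot_of_eval_ne_f hσ)

variable {x₁ x₂ y₁ y₂ : APT α Act} {φ : Fml α} {a : Act} {o : Option (APT α Act)}
  {σ : α → V3}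

lemma AIsSim.matched_alt (hR : AIsSim γ R) (h₁ : R x₁ y₁) (h₂ : R x₂ y₂)
    (ht : ATr γ (.alt x₁ x₂) φ a o) (hσ : eval σ (sigA (.alt x₁ x₂)) ≠ .f)
    (hφ : eval σ φ ≠ .f) : Matched γ (CongrStep R) σ (.alt y₁ y₂) φ a o := by
  obtain ⟨hσ₁, hσ₂⟩ := eval_conj_ne_f_iff.mp hσ
  have hroot := (CongrStep.alt h₁ h₂).not_eqBot hR hσ
  cases ht with
  | altL _ ht _ =>
    obtain ⟨ψ, o', he, ht', ho⟩ := hR.matched h₁ ht hσ₁ hφ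
    exact ⟨ψ, o', he, .altL _ ht' hroot, ho.mono fun _ _ => .base⟩
  | altR _ ht _ =>
    obtain ⟨ψ, o', he, ht', ho⟩ := hR.matched h₂ ht hσ₂ hφ
    exact ⟨ψ, o', he, .altR _ ht' hroot, ho.mono fun _ _ => .base⟩

lemma AIsSim.matched_seq (hR : AIsSim γ R) (h₁ : R x₁ y₁) (h₂ : R x₂ y₂)
    (ht : ATr γ (.seq x₁ x₂) φ a o) (hσ : eval σ (sigA (.seq x₁ x₂)) ≠ .f)
    (hφ : eval σ φ ≠ .f) : Matched γ (CongrStep R) σ (.seq y₁ y₂) φ a o := by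
  cases ht with
  | seqT _ ht hx₂ =>
    obtain ⟨ψ, o', he, ht', ho⟩ := hR.matched h₁ ht hσ hφ
    cases ho.eq_none
    exact ⟨ψ, _, he, .seqT _ ht' ((hR _ _ h₂).2.not_eqBot hx₂), .base h₂⟩
  | seqS _ ht =>
    obtain ⟨ψ, o', he, ht', ho⟩ := hR.matched h₁ ht hσ hφ
    obtain ⟨y₁', rfl, hr⟩ := ho.exists_of_some
    exact ⟨ψ, _, he, .seqS _ ht', .seq hr h₂⟩

lemma AIsSim.matched_gc (hR : AIsSim γ R) (ψ : Fml α) (h : R x₁ y₁)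
    (ht : ATr γ (.gc ψ x₁) φ a o) (hσ : eval σ (sigA (.gc ψ x₁)) ≠ .f)
    (hφ : eval σ φ ≠ .f) : Matched γ (CongrStep R) σ (.gc ψ y₁) φ a o := by
  cases ht with
  | gcR _ ht _ =>
    obtain ⟨hφ₁, hψ⟩ := eval_conj_ne_f_iff.mp hφ
    rw [sigA, eval_imp_of_ne_f hψ] at hσ
    obtain ⟨χ, o', he, ht', ho⟩ := hR.matched h ht hσ hφ₁
    have he' := eval_conj_congr (B := ψ) he rfl
    exact ⟨χ.conj ψ, o', he', .gcR ψ ht' (not_eqBot_of_eval_ne_f (he' ▸ hφ)),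
      ho.mono fun _ _ => .base⟩

lemma AIsSim.matched_se (hR : AIsSim γ R) (ψ : Fml α) (h : R x₁ y₁)
    (ht : ATr γ (.se ψ x₁) φ a o) (hσ : eval σ (sigA (.se ψ x₁)) ≠ .f)
    (hφ : eval σ φ ≠ .f) : Matched γ (CongrStep R) σ (.se ψ y₁) φ a o := by
  cases ht with
  | seR _ ht _ =>
    obtain ⟨χ, o', he, ht', ho⟩ := hR.matched h ht (eval_conj_ne_f_iff.mp hσ).2 hφ
    exact ⟨χ, o', he, .seR ψ ht' ((CongrStep.se ψ h).not_eqBot hR hσ),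
      ho.mono fun _ _ => .base⟩

lemma AIsSim.matched_par (hR : AIsSim γ R) (h₁ : R x₁ y₁) (h₂ : R x₂ y₂)
    (ht : ATr γ (.par x₁ x₂) φ a o) (hσ : eval σ (sigA (.par x₁ x₂)) ≠ .f)
    (hφ : eval σ φ ≠ .f) : Matched γ (CongrStep R) σ (.par y₁ y₂) φ a o := by
  obtain ⟨hσ₁, hσ₂⟩ := eval_conj_ne_f_iff.mp hσ
  have hroot := (CongrStep.par h₁ h₂).not_eqBot hR hσ
  have hsig {x y} (h : R x y) : FEquiv (sigA x) (sigA y) := (hR x y h).2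
  cases ht with
  | parTL _ ht _ hx₂ =>
    obtain ⟨ψ, o', he, ht', ho⟩ := hR.matched h₁ ht hσ₁ hφ
    cases ho.eq_none
    exact ⟨ψ, _, he, .parTL _ ht' hroot ((hsig h₂).not_eqBot hx₂), .base h₂⟩
  | parTR _ ht _ hx₁ =>
    obtain ⟨ψ, o', he, ht', ho⟩ := hR.matched h₂ ht hσ₂ hφ
    cases ho.eq_none
    exact ⟨ψ, _, he, .parTR _ ht' hroot ((hsig h₁).not_eqBot hx₁), .base h₁⟩
  | parSL _ ht _ hx =>
    obtain ⟨ψ, o', he, ht', ho⟩ := hR.matched h₁ ht hσ₁ hφ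
    obtain ⟨y₁', rfl, hr⟩ := ho.exists_of_some
    exact ⟨ψ, _, he, .parSL _ ht' hroot ((hsig hr).conj (hsig h₂) |>.not_eqBot hx),
      .par hr h₂⟩
  | parSR _ ht _ hx =>
    obtain ⟨ψ, o', he, ht', ho⟩ := hR.matched h₂ ht hσ₂ hφ
    obtain ⟨y₂', rfl, hr⟩ := ho.exists_of_some
    exact ⟨ψ, _, he, .parSR _ ht' hroot ((hsig h₁).conj (hsig hr) |>.not_eqBot hx),
      .par h₁ hr⟩
  | parCTT ht₁ ht₂ hc _ _ =>
    obtain ⟨_, _, _, _, he, hne, ht₁', ht₂', ho₁, ho₂⟩ := hR.matched_sync h₁ h₂ ht₁ ht₂ hσ hφ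
    cases ho₁.eq_none; cases ho₂.eq_none
    exact ⟨_, _, he, .parCTT ht₁' ht₂' hc hne hroot, trivial⟩
  | parCTS ht₁ ht₂ hc _ _ =>
    obtain ⟨_, _, _, _, he, hne, ht₁', ht₂', ho₁, ho₂⟩ := hR.matched_sync h₁ h₂ ht₁ ht₂ hσ hφ
    cases ho₁.eq_none
    obtain ⟨y₂', rfl, hr⟩ := ho₂.exists_of_some
    exact ⟨_, _, he, .parCTS ht₁' ht₂' hc hne hroot, .base hr⟩
  | parCST ht₁ ht₂ hc _ _ =>
    obtain ⟨_, _, _, _, he, hne, ht₁', ht₂', ho₁, ho₂⟩ := hR.matched_sync h₁ h₂ ht₁ ht₂ hσ hφ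
    obtain ⟨y₁', rfl, hr⟩ := ho₁.exists_of_some
    cases ho₂.eq_none
    exact ⟨_, _, he, .parCST ht₁' ht₂' hc hne hroot, .base hr⟩
  | parCSS ht₁ ht₂ hc _ _ hx =>
    obtain ⟨_, _, _, _, he, hne, ht₁', ht₂', ho₁, ho₂⟩ := hR.matched_sync h₁ h₂ ht₁ ht₂ hσ hφ
    obtain ⟨y₁', rfl, hr₁⟩ := ho₁.exists_of_some
    obtain ⟨y₂', rfl, hr₂⟩ := ho₂.exists_of_some
    exact ⟨_, _, he, .parCSS ht₁' ht₂' hc hne hroot ((hsig hr₁).conj (hsig hr₂) |>.not_eqBot hx),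
      .par hr₁ hr₂⟩

lemma AIsSim.matched_lm (hR : AIsSim γ R) (h₁ : R x₁ y₁) (h₂ : R x₂ y₂)
    (ht : ATr γ (.lm x₁ x₂) φ a o) (hσ : eval σ (sigA (.lm x₁ x₂)) ≠ .f)
    (hφ : eval σ φ ≠ .f) : Matched γ (CongrStep R) σ (.lm y₁ y₂) φ a o := by
  have hσ₁ := (eval_conj_ne_f_iff.mp hσ).1
  have hroot := (CongrStep.lm h₁ h₂).not_eqBot hR hσ
  have hsig {x y} (h : R x y) : FEquiv (sigA x) (sigA y) := (hR x y h).2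
  cases ht with
  | lmT _ ht _ hx₂ =>
    obtain ⟨ψ, o', he, ht', ho⟩ := hR.matched h₁ ht hσ₁ hφ
    cases ho.eq_none
    exact ⟨ψ, _, he, .lmT _ ht' hroot ((hsig h₂).not_eqBot hx₂), .base h₂⟩
  | lmS _ ht _ hx =>
    obtain ⟨ψ, o', he, ht', ho⟩ := hR.matched h₁ ht hσ₁ hφ
    obtain ⟨y₁', rfl, hr⟩ := ho.exists_of_some
    exact ⟨ψ, _, he, .lmS _ ht' hroot ((hsig hr).conj (hsig h₂) |>.not_eqBot hx), .par hr h₂⟩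

lemma AIsSim.matched_cm (hR : AIsSim γ R) (h₁ : R x₁ y₁) (h₂ : R x₂ y₂)
    (ht : ATr γ (.cm x₁ x₂) φ a o) (hσ : eval σ (sigA (.cm x₁ x₂)) ≠ .f)
    (hφ : eval σ φ ≠ .f) : Matched γ (CongrStep R) σ (.cm y₁ y₂) φ a o := by
  have hroot := (CongrStep.cm h₁ h₂).not_eqBot hR hσ
  have hsig {x y} (h : R x y) : FEquiv (sigA x) (sigA y) := (hR x y h).2
  cases ht with
  | cmTT ht₁ ht₂ hc _ _ =>
    obtain ⟨_, _, _, _, he, hne, ht₁', ht₂', ho₁, ho₂⟩ := hR.matched_sync h₁ h₂ ht₁ ht₂ hσ hφ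
    cases ho₁.eq_none; cases ho₂.eq_none
    exact ⟨_, _, he, .cmTT ht₁' ht₂' hc hne hroot, trivial⟩
  | cmTS ht₁ ht₂ hc _ _ =>
    obtain ⟨_, _, _, _, he, hne, ht₁', ht₂', ho₁, ho₂⟩ := hR.matched_sync h₁ h₂ ht₁ ht₂ hσ hφ
    cases ho₁.eq_none
    obtain ⟨y₂', rfl, hr⟩ := ho₂.exists_of_some
    exact ⟨_, _, he, .cmTS ht₁' ht₂' hc hne hroot, .base hr⟩
  | cmST ht₁ ht₂ hc _ _ =>
    obtain ⟨_, _, _, _, he, hne, ht₁', ht₂', ho₁, ho₂⟩ := hR.matched_sync h₁ h₂ ht₁ ht₂ hσ hφ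
    obtain ⟨y₁', rfl, hr⟩ := ho₁.exists_of_some
    cases ho₂.eq_none
    exact ⟨_, _, he, .cmST ht₁' ht₂' hc hne hroot, .base hr⟩
  | cmSS ht₁ ht₂ hc _ _ hx =>
    obtain ⟨_, _, _, _, he, hne, ht₁', ht₂', ho₁, ho₂⟩ := hR.matched_sync h₁ h₂ ht₁ ht₂ hσ hφ
    obtain ⟨y₁', rfl, hr₁⟩ := ho₁.exists_of_some
    obtain ⟨y₂', rfl, hr₂⟩ := ho₂.exists_of_some
    exact ⟨_, _, he, .cmSS ht₁' ht₂' hc hne hroot ((hsig hr₁).conj (hsig hr₂) |>.not_eqBot hx),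
      .par hr₁ hr₂⟩

lemma AIsSim.matched_encap (hR : AIsSim γ R) (K : Set Act) (h : R x₁ y₁)
    (ht : ATr γ (.encap K x₁) φ a o) (hσ : eval σ (sigA (.encap K x₁)) ≠ .f)
    (hφ : eval σ φ ≠ .f) : Matched γ (CongrStep R) σ (.encap K y₁) φ a o := by
  cases ht with
  | encapR _ ht ha =>
    obtain ⟨ψ, o', he, ht', ho⟩ := hR.matched h ht hσ hφ
    exact ⟨ψ, _, he, .encapR K ht' ha, ho.map _ fun _ _ => .encap K⟩

theorem AIsSim.congrStep (hR : AIsSim γ R) : AIsSim γ (CongrStep R) := by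
  intro u v h
  refine ⟨fun φ a o ht σ hσ hφ => ?_, h.sigA_equiv hR⟩
  cases h with
  | base h => exact (hR.matched h ht hσ hφ).mono fun _ _ => .base
  | alt h₁ h₂ => exact hR.matched_alt h₁ h₂ ht hσ hφ
  | seq h₁ h₂ => exact hR.matched_seq h₁ h₂ ht hσ hφ
  | gc ψ h => exact hR.matched_gc ψ h ht hσ hφ
  | se ψ h => exact hR.matched_se ψ h ht hσ hφ
  | par h₁ h₂ => exact hR.matched_par h₁ h₂ ht hσ hφ
  | lm h₁ h₂ => exact hR.matched_lm h₁ h₂ ht hσ hφ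
  | cm h₁ h₂ => exact hR.matched_cm h₁ h₂ ht hσ hφ
  | encap K h => exact hR.matched_encap K h ht hσ hφ

theorem AIsBisim.congrStep (hR : AIsBisim γ R) : AIsBisim γ (CongrStep R) := by
  obtain ⟨hfwd, hbwd⟩ := aIsBisim_iff.mp hR
  refine aIsBisim_iff.mpr ⟨hfwd.congrStep, fun u v h => ?_⟩
  exact (hbwd.congrStep u v (CongrStep.flip (R := flip R) h)).mono fun _ _ => CongrStep.flip

end CongrStep

section Bisimilarity
variable {α Act : Type} {γ : Option Act → Option Act → Option Act} {p q : APT α Act}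

theorem aIsBisim_aBisim : AIsBisim γ (ABisim (α := α) γ) := by
  rintro p q ⟨R, hR, hpq⟩
  exact ⟨(hR p q hpq).1.mono fun _ _ h => ⟨R, hR, h⟩, (hR p q hpq).2.mono fun _ _ h => ⟨R, hR, h⟩⟩

theorem ABisim.of_congrStep (h : CongrStep (ABisim γ) p q) : ABisim γ p q :=
  ⟨_, aIsBisim_aBisim.congrStep, h⟩

end Bisimilarity

theorem ctACPps_congruence_general {α Act : Type}
    (γ : Option Act → Option Act → Option Act)
    (p q p' q' : APT α Act) (φ : Fml α) (H : Set Act)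
    (h : ABisim γ p q) (h' : ABisim γ p' q') :
    ABisim γ (.alt p p') (.alt q q') ∧ ABisim γ (.seq p p') (.seq q q') ∧
    ABisim γ (.gc φ p) (.gc φ q) ∧ ABisim γ (.se φ p) (.se φ q) ∧
    ABisim γ (.par p p') (.par q q') ∧ ABisim γ (.lm p p') (.lm q q') ∧
    ABisim γ (.cm p p') (.cm q q') ∧ ABisim γ (.encap H p) (.encap H q) :=
  ⟨.of_congrStep (.alt h h'), .of_congrStep (.seq h h'), .of_congrStep (.gc φ h),
    .of_congrStep (.se φ h), .of_congrStep (.par h h'), .of_congrStep (.lm h h'),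
    .of_congrStep (.cm h h'), .of_congrStep (.encap H h)⟩

/-- Bisimulation equivalence is a congruence for the operators of ctACPps. -/
theorem ctACPps_congruence {α Act : Type} [Fintype α] [Fintype Act]
    (γ : Option Act → Option Act → Option Act)
    (hγcomm : ∀ a b, γ a b = γ b a)
    (hγassoc : ∀ a b c, γ (γ a b) c = γ a (γ b c))
    (hγdelta : ∀ a, γ none a = none)
    (p q p' q' : APT α Act) (φ : Fml α) (H : Set Act)
    (h : ABisim γ p q) (h' : ABisim γ p' q') :
    ABisim γ (.alt p p') (.alt q q') ∧ ABisim γ (.seq p p') (.seq q q') ∧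
    ABisim γ (.gc φ p) (.gc φ q) ∧ ABisim γ (.se φ p) (.se φ q) ∧
    ABisim γ (.par p p') (.par q q') ∧ ABisim γ (.lm p p') (.lm q q') ∧
    ABisim γ (.cm p p') (.cm q q') ∧ ABisim γ (.encap H p) (.encap H q) :=
  ctACPps_congruence_general γ p q p' q' φ H h h'
end
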